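/- arXiv:2509.08413 — 2 statements merged into one kernel-verified Lean document; each statement's English description precedes it below -/
import Mathlib

section
/- Naive weight accuracy (two-weight case with distinct coefficients): Let d_0, d_1 > 0 with d_0 + d_1 = 1, let C_0, C_1 > 0, p ≥ 1, and let τ, β_0, β_1 be positive functions of h with τ(h) = O(h^m), β_k(h) = a·h^{n1}·(1 + O(h)) with a > 0 and m > n1 ≥ 1. Define α_k = d_k·(1 + C_k·(τ/β_k)^p) and ω_k = α_k/(α_0 + α_1). Then ω_k − d_k = O(h^{p(m−n1)}) as h → 0⁺. -/
/-!
Since `d₀ + d₁ = 1`, the deviation of a normalized weight is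
`ω₀ - d₀ = d₀ d₁ (x₀ - x₁) / (d₀ (1 + x₀) + d₁ (1 + x₁))` with `xₖ = Cₖ (τ/βₖ)^p ≥ 0`;
the denominator is at least `1`, so `|ωₖ - dₖ| ≤ d₀ d₁ (x₀ + x₁)`. For small `h` the
expansion of `βₖ` gives `βₖ ≥ (a/2) h^n1`, hence `τ/βₖ ≤ (2K/a) h^(m-n1)` and
`xₖ = O(h^(p(m-n1)))`.
-/

open Filter Topology Set

lemma eventually_nhdsGT_zero_iff {P : ℝ → Prop} :
    (∀ᶠ h in 𝓝[>] 0, P h) ↔ ∃ ε > 0, ∀ h ∈ Ioo 0 ε, P h :=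
  (nhdsGT_basis 0).eventually_iff

lemma abs_normalized_weight_sub_le {d0 d1 x0 x1 B : ℝ} (hd0 : 0 ≤ d0) (hd1 : 0 ≤ d1)
    (hsum : d0 + d1 = 1) (hx0 : 0 ≤ x0) (hx1 : 0 ≤ x1) (hB : x0 + x1 ≤ B) :
    |d0 * (1 + x0) / (d0 * (1 + x0) + d1 * (1 + x1)) - d0| ≤ d0 * d1 * B := by
  have hS : 1 ≤ d0 * (1 + x0) + d1 * (1 + x1) := by nlinarith
  have hS0 : 0 < d0 * (1 + x0) + d1 * (1 + x1) := by linarith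
  have hdev : d0 * (1 + x0) / (d0 * (1 + x0) + d1 * (1 + x1)) - d0
      = d0 * d1 * (x0 - x1) / (d0 * (1 + x0) + d1 * (1 + x1)) := by
    rw [eq_div_iff hS0.ne', sub_mul, div_mul_cancel₀ _ hS0.ne']
    linear_combination (-d0 * (1 + x0)) * hsum
  have hnum : |d0 * d1 * (x0 - x1)| ≤ d0 * d1 * B := by
    rw [abs_mul, abs_of_nonneg (mul_nonneg hd0 hd1)]
    exact mul_le_mul_of_nonneg_left (abs_le.2 ⟨by linarith, by linarith⟩) (mul_nonneg hd0 hd1)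
  rw [hdev, abs_div, abs_of_pos hS0]
  exact (div_le_self (abs_nonneg _) hS).trans hnum

lemma eventually_half_mul_pow_le {β : ℝ → ℝ} {a K : ℝ} {n : ℕ} (ha : 0 < a)
    (hβ : ∀ᶠ h in 𝓝[>] 0, |β h - a * h ^ n| ≤ K * h ^ (n + 1)) :
    ∀ᶠ h in 𝓝[>] 0, a / 2 * h ^ n ≤ β h := by
  have hsmall : ∀ᶠ h in 𝓝[>] (0 : ℝ), K * h < a / 2 := by
    have hlim : Tendsto (fun h : ℝ ↦ K * h) (𝓝 0) (𝓝 0) := by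
      simpa using (continuous_const_mul K).tendsto 0
    exact nhdsWithin_le_nhds (hlim.eventually (gt_mem_nhds (half_pos ha)))
  filter_upwards [hβ, hsmall, self_mem_nhdsWithin] with h hβh hKh (hh : 0 < h)
  have hrem : K * h ^ (n + 1) ≤ a / 2 * h ^ n := by
    rw [pow_succ, mul_comm (h ^ n) h, ← mul_assoc]
    exact mul_le_mul_of_nonneg_right hKh.le (pow_nonneg hh.le n)
  linarith [(abs_le.1 hβh).1]

lemma div_rpow_le_of_le_pow {τ β K a p h : ℝ} {m n : ℕ} (hnm : n ≤ m) (hh : 0 < h)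
    (ha : 0 < a) (hp : 0 ≤ p) (hτ0 : 0 ≤ τ) (hτ : τ ≤ K * h ^ m) (hβ : a / 2 * h ^ n ≤ β) :
    (τ / β) ^ p ≤ (2 * K / a) ^ p * h ^ (p * ((m : ℝ) - n)) := by
  have hK : 0 ≤ K := nonneg_of_mul_nonneg_left (hτ0.trans hτ) (pow_pos hh m)
  have hβ0 : 0 < β := lt_of_lt_of_le (by positivity) hβ
  have hratio : τ / β ≤ 2 * K / a * h ^ (m - n) := by
    rw [div_le_iff₀ hβ0]
    calc τ ≤ K * h ^ m := hτ
      _ = 2 * K / a * h ^ (m - n) * (a / 2 * h ^ n) := by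
        rw [← Nat.sub_add_cancel hnm, pow_add, Nat.add_sub_cancel]
        field_simp
      _ ≤ 2 * K / a * h ^ (m - n) * β := by gcongr
  have hpow : (h ^ (m - n)) ^ p = h ^ (p * ((m : ℝ) - n)) := by
    rw [← Real.rpow_natCast, ← Real.rpow_mul hh.le, Nat.cast_sub hnm, mul_comm]
  calc (τ / β) ^ p ≤ (2 * K / a * h ^ (m - n)) ^ p :=
        Real.rpow_le_rpow (div_nonneg hτ0 hβ0.le) hratio hp
    _ = (2 * K / a) ^ p * h ^ (p * ((m : ℝ) - n)) := by
        rw [Real.mul_rpow (by positivity) (by positivity), hpow]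

theorem weno_naive_weight_accuracy_general
    (d0 d1 C0 C1 p a : ℝ) (m n1 : ℕ)
    (τ β0 β1 : ℝ → ℝ)
    (hd0 : 0 < d0) (hd1 : 0 < d1) (hsum : d0 + d1 = 1)
    (hC0 : 0 < C0) (hC1 : 0 < C1) (hp : 1 ≤ p) (ha : 0 < a)
    (hm : n1 < m)
    (hpos : ∃ ε > 0, ∀ h ∈ Set.Ioo (0:ℝ) ε, 0 < τ h ∧ 0 < β0 h ∧ 0 < β1 h)
    (hτ : ∃ K > 0, ∃ ε > 0, ∀ h ∈ Set.Ioo (0:ℝ) ε, |τ h| ≤ K * h ^ m)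
    (hβ0 : ∃ K > 0, ∃ ε > 0, ∀ h ∈ Set.Ioo (0:ℝ) ε,
      |β0 h - a * h ^ n1| ≤ K * h ^ (n1 + 1))
    (hβ1 : ∃ K > 0, ∃ ε > 0, ∀ h ∈ Set.Ioo (0:ℝ) ε,
      |β1 h - a * h ^ n1| ≤ K * h ^ (n1 + 1)) :
    ∃ K > 0, ∃ ε > 0, ∀ h ∈ Set.Ioo (0:ℝ) ε,
      |d0 * (1 + C0 * (τ h / β0 h) ^ p) /
          (d0 * (1 + C0 * (τ h / β0 h) ^ p) + d1 * (1 + C1 * (τ h / β1 h) ^ p)) - d0|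
        ≤ K * h ^ (p * ((m : ℝ) - (n1 : ℝ))) ∧
      |d1 * (1 + C1 * (τ h / β1 h) ^ p) /
          (d0 * (1 + C0 * (τ h / β0 h) ^ p) + d1 * (1 + C1 * (τ h / β1 h) ^ p)) - d1|
        ≤ K * h ^ (p * ((m : ℝ) - (n1 : ℝ))) := by
  obtain ⟨Kτ, hKτ, hτ⟩ := hτ
  obtain ⟨K0, -, hβ0⟩ := hβ0
  obtain ⟨K1, -, hβ1⟩ := hβ1
  rw [← eventually_nhdsGT_zero_iff] at hpos hτ hβ0 hβ1
  set B := (C0 + C1) * (2 * Kτ / a) ^ p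
  refine ⟨d0 * d1 * B, by positivity, eventually_nhdsGT_zero_iff.1 ?_⟩
  filter_upwards [hpos, hτ, eventually_half_mul_pow_le ha hβ0, eventually_half_mul_pow_le ha hβ1,
    self_mem_nhdsWithin] with h ⟨hτ0, hβ0h, hβ1h⟩ hτh hβ0le hβ1le (hh : 0 < h)
  have hτle : τ h ≤ Kτ * h ^ m := (le_abs_self _).trans hτh
  have hp0 : 0 ≤ p := by linarith
  have hx0 := div_rpow_le_of_le_pow hm.le hh ha hp0 hτ0.le hτle hβ0le
  have hx1 := div_rpow_le_of_le_pow hm.le hh ha hp0 hτ0.le hτle hβ1le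
  have hxsum : C0 * (τ h / β0 h) ^ p + C1 * (τ h / β1 h) ^ p
      ≤ B * h ^ (p * ((m : ℝ) - n1)) := by
    have := mul_le_mul_of_nonneg_left hx0 hC0.le
    have := mul_le_mul_of_nonneg_left hx1 hC1.le
    linarith
  have hx0nn : 0 ≤ C0 * (τ h / β0 h) ^ p := by positivity
  have hx1nn : 0 ≤ C1 * (τ h / β1 h) ^ p := by positivity
  constructor
  · rw [mul_assoc]
    exact abs_normalized_weight_sub_le hd0.le hd1.le hsum hx0nn hx1nn hxsum
  · rw [add_comm (d0 * _), mul_assoc, mul_comm d0 d1]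
    exact abs_normalized_weight_sub_le hd1.le hd0.le (by linarith) hx1nn hx0nn
      (by linarith)

/-- Naive weight accuracy (CASE 1 of Lemma 3.1): with possibly distinct
coefficients `C_0 ≠ C_1` the normalized weights deviate from the linear weights
by the conventional order `O(h^(p(m-n1)))`. -/
theorem weno_naive_weight_accuracy
    (d0 d1 C0 C1 p a : ℝ) (m n1 : ℕ)
    (τ β0 β1 : ℝ → ℝ)
    (hd0 : 0 < d0) (hd1 : 0 < d1) (hsum : d0 + d1 = 1)
    (hC0 : 0 < C0) (hC1 : 0 < C1) (hp : 1 ≤ p) (ha : 0 < a)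
    (hn1 : 1 ≤ n1) (hm : n1 < m)
    (hpos : ∃ ε > 0, ∀ h ∈ Set.Ioo (0:ℝ) ε, 0 < τ h ∧ 0 < β0 h ∧ 0 < β1 h)
    (hτ : ∃ K > 0, ∃ ε > 0, ∀ h ∈ Set.Ioo (0:ℝ) ε, |τ h| ≤ K * h ^ m)
    (hβ0 : ∃ K > 0, ∃ ε > 0, ∀ h ∈ Set.Ioo (0:ℝ) ε,
      |β0 h - a * h ^ n1| ≤ K * h ^ (n1 + 1))
    (hβ1 : ∃ K > 0, ∃ ε > 0, ∀ h ∈ Set.Ioo (0:ℝ) ε,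
      |β1 h - a * h ^ n1| ≤ K * h ^ (n1 + 1)) :
    ∃ K > 0, ∃ ε > 0, ∀ h ∈ Set.Ioo (0:ℝ) ε,
      |d0 * (1 + C0 * (τ h / β0 h) ^ p) /
          (d0 * (1 + C0 * (τ h / β0 h) ^ p) + d1 * (1 + C1 * (τ h / β1 h) ^ p)) - d0|
        ≤ K * h ^ (p * ((m : ℝ) - (n1 : ℝ))) ∧
      |d1 * (1 + C1 * (τ h / β1 h) ^ p) /
          (d0 * (1 + C0 * (τ h / β0 h) ^ p) + d1 * (1 + C1 * (τ h / β1 h) ^ p)) - d1|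
        ≤ K * h ^ (p * ((m : ℝ) - (n1 : ℝ))) :=
  weno_naive_weight_accuracy_general d0 d1 C0 C1 p a m n1 τ β0 β1 hd0 hd1 hsum hC0 hC1 hp ha hm hpos
    hτ hβ0 hβ1
end

section
/- Expansion of the extended local indicator β_1* at a critical point: Let f be smooth, x_c = x_j + λ·h with λ ∈ (−1,1) and f′(x_c) = 0, and let C > 0. Define β_1* = ¼(3f(x_j) − 4f(x_j+h) + f(x_j+2h))² + C·(f(x_j) − 2f(x_j+h) + f(x_j+2h))². Then β_1* = (λ² + C)·f″(x_c)²·h⁴ + O(h⁵). Analogously, β_0* = ¼(3f(x_j) − 4f(x_j−h) + f(x_j−2h))² + C·(f(x_j−2h) − 2f(x_j−h) + f(x_j))² satisfies β_0* = (λ² + C)·f″(x_c)²·h⁴ + O(h⁵). -/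
section WenoAux
open Set

lemma idw_eq {f : ℝ → ℝ} (hf : ContDiff ℝ (⊤ : ℕ∞) f) {s : Set ℝ} (hs : UniqueDiffOn ℝ s)
    {x : ℝ} (hx : x ∈ s) (n : ℕ) : iteratedDerivWithin n f s x = iteratedDeriv n f x := by
  have h : HasFTaylorSeriesUpTo (n : ℕ∞) f (ftaylorSeries ℝ f) :=
    contDiff_iff_ftaylorSeries.mp (hf.of_le (by exact_mod_cast WithTop.coe_le_coe.mpr (le_top (a := ((n:ℕ):ℕ∞)))))
  have h2 := (h.hasFTaylorSeriesUpToOn s).eq_iteratedFDerivWithin_of_uniqueDiffOn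
    (by exact_mod_cast le_refl (n : WithTop ℕ∞)) hs hx
  simp only [iteratedDerivWithin, iteratedDeriv, ← h2]
  rfl

lemma taylor3_right (f : ℝ → ℝ) (hf : ContDiff ℝ (⊤ : ℕ∞) f) (a C : ℝ)
    (hC : ∀ y ∈ Icc a (a + 1), |iteratedDeriv 4 f y| ≤ C) :
    ∀ u : ℝ, 0 ≤ u → u ≤ 1 →
      |f (a + u) - (f a + deriv f a * u + iteratedDeriv 2 f a / 2 * u ^ 2 +
          iteratedDeriv 3 f a / 6 * u ^ 3)| ≤ C * u ^ 4 / 6 := by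
  intro u hu0 hu1
  have hab : a < a + 1 := by linarith
  have hs : UniqueDiffOn ℝ (Icc a (a + 1)) := uniqueDiffOn_Icc hab
  have hx : a + u ∈ Icc a (a + 1) := ⟨by linarith, by linarith⟩
  have ha : a ∈ Icc a (a + 1) := ⟨le_rfl, by linarith⟩
  have key := taylor_mean_remainder_bound (f := f) (a := a) (b := a + 1) (x := a + u)
    (n := 3) hab.le ((hf.of_le (by rw [← WithTop.coe_natCast]; exact WithTop.coe_le_coe.mpr le_top)).contDiffOn) hx
    (fun y hy => by
      rw [Real.norm_eq_abs, idw_eq hf hs hy 4]; exact hC y hy)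
  rw [taylor_within_apply] at key
  simp only [Finset.sum_range_succ, Finset.sum_range_zero, idw_eq hf hs ha,
    iteratedDeriv_zero, iteratedDeriv_one, smul_eq_mul, Real.norm_eq_abs] at key
  have e : a + u - a = u := by ring
  rw [e] at key
  calc |f (a + u) - (f a + deriv f a * u + iteratedDeriv 2 f a / 2 * u ^ 2 +
          iteratedDeriv 3 f a / 6 * u ^ 3)|
      = |f (a + u) - (0 + (Nat.factorial 0 : ℝ)⁻¹ * u ^ 0 * f a +
          (Nat.factorial 1 : ℝ)⁻¹ * u ^ 1 * deriv f a +
          (Nat.factorial 2 : ℝ)⁻¹ * u ^ 2 * iteratedDeriv 2 f a +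
          (Nat.factorial 3 : ℝ)⁻¹ * u ^ 3 * iteratedDeriv 3 f a)| := by
        norm_num [Nat.factorial]; ring_nf
    _ ≤ C * u ^ (3 + 1) / (Nat.factorial 3 : ℝ) := key
    _ = C * u ^ 4 / 6 := by norm_num [Nat.factorial]

lemma taylor3_bound (f : ℝ → ℝ) (hf : ContDiff ℝ (⊤ : ℕ∞) f) (a : ℝ) :
    ∃ M, 0 < M ∧ ∀ u : ℝ, |u| ≤ 1 →
      |f (a + u) - (f a + deriv f a * u + iteratedDeriv 2 f a / 2 * u ^ 2 +
          iteratedDeriv 3 f a / 6 * u ^ 3)| ≤ M * u ^ 4 := by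
  have hcont : ContinuousOn (iteratedDeriv 4 f) (Icc (a - 1) (a + 1)) :=
    (hf.continuous_iteratedDeriv 4 (by exact WithTop.coe_le_coe.mpr le_top)).continuousOn
  obtain ⟨C, hCb⟩ := (isCompact_Icc (a := a - 1) (b := a + 1)).exists_bound_of_continuousOn hcont
  have hC0 : 0 ≤ C := le_trans (norm_nonneg _) (hCb a ⟨by linarith, by linarith⟩)
  refine ⟨C / 6 + 1, by positivity, fun u hu => ?_⟩
  have hu1 : u ≤ 1 := le_trans (le_abs_self u) hu
  have hu2 : -1 ≤ u := neg_le_of_abs_le hu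
  have hbig : C * u ^ 4 / 6 ≤ (C / 6 + 1) * u ^ 4 := by nlinarith [pow_nonneg (sq_nonneg u) 2, sq_nonneg (u^2)]
  rcases le_or_gt 0 u with hpos | hneg
  · refine le_trans (taylor3_right f hf a C (fun y hy => hCb y ⟨by linarith [hy.1], hy.2⟩) u hpos hu1) hbig
  · -- reflect
    set g : ℝ → ℝ := fun x => f (-x) with hg
    have hgc : ContDiff ℝ (⊤ : ℕ∞) g := hf.comp contDiff_neg
    have hgd : ∀ n : ℕ, ∀ y : ℝ, iteratedDeriv n g y = (-1 : ℝ) ^ n * iteratedDeriv n f (-y) := by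
      intro n y
      simpa [smul_eq_mul] using iteratedDeriv_comp_neg n f y
    have hbound : ∀ y ∈ Icc (-a) (-a + 1), |iteratedDeriv 4 g y| ≤ C := by
      intro y hy
      rw [hgd 4 y]
      simp only [neg_one_pow_eq_one_iff_even, show ((-1:ℝ))^4 = 1 by norm_num, one_mul]
      exact hCb (-y) ⟨by linarith [hy.2], by linarith [hy.1]⟩
    have key := taylor3_right g hgc (-a) C hbound (-u) (by linarith) (by linarith)
    have e1 : g (-a + -u) = f (a + u) := by simp [hg]; ring_nf
    have e2 : deriv g (-a) = -deriv f a := by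
      have := hgd 1 (-a)
      simpa [iteratedDeriv_one] using this
    have e3 : iteratedDeriv 2 g (-a) = iteratedDeriv 2 f a := by simp [hgd 2 (-a)]
    have e4 : iteratedDeriv 3 g (-a) = -iteratedDeriv 3 f a := by rw [hgd 3 (-a)]; norm_num
    rw [e1, e2, e3, e4] at key
    have e5 : g (-a) = f a := by simp [hg]
    rw [e5] at key
    have e6 : f a + -deriv f a * -u + iteratedDeriv 2 f a / 2 * (-u) ^ 2 +
        -iteratedDeriv 3 f a / 6 * (-u) ^ 3 = f a + deriv f a * u +
        iteratedDeriv 2 f a / 2 * u ^ 2 + iteratedDeriv 3 f a / 6 * u ^ 3 := by ring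
    rw [e6] at key
    have e7 : (-u) ^ 4 = u ^ 4 := by ring
    rw [e7] at key
    exact le_trans key hbig

lemma comboBound (f : ℝ → ℝ) (hf : ContDiff ℝ (⊤ : ℕ∞) f) (a : ℝ) :
    ∃ M, 0 < M ∧ ∀ a₀ a₁ a₂ μ₀ μ₁ μ₂ h : ℝ, 0 < h → h ≤ 1/3 →
      |μ₀| ≤ 3 → |μ₁| ≤ 3 → |μ₂| ≤ 3 →
      |a₀ * f (a + μ₀ * h) + a₁ * f (a + μ₁ * h) + a₂ * f (a + μ₂ * h) -
        ((a₀ + a₁ + a₂) * f a + (a₀ * μ₀ + a₁ * μ₁ + a₂ * μ₂) * deriv f a * h +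
          (a₀ * μ₀ ^ 2 + a₁ * μ₁ ^ 2 + a₂ * μ₂ ^ 2) * (iteratedDeriv 2 f a / 2) * h ^ 2 +
          (a₀ * μ₀ ^ 3 + a₁ * μ₁ ^ 3 + a₂ * μ₂ ^ 3) * (iteratedDeriv 3 f a / 6) * h ^ 3)|
      ≤ (|a₀| + |a₁| + |a₂|) * (81 * M) * h ^ 4 := by
  obtain ⟨M, hM, hbd⟩ := taylor3_bound f hf a
  refine ⟨M, hM, ?_⟩
  intro a₀ a₁ a₂ μ₀ μ₁ μ₂ h hh0 hh1 h0 h1 h2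
  set P : ℝ → ℝ := fun u => f a + deriv f a * u + iteratedDeriv 2 f a / 2 * u ^ 2 +
    iteratedDeriv 3 f a / 6 * u ^ 3 with hP
  have key : ∀ μ : ℝ, |μ| ≤ 3 → |f (a + μ * h) - P (μ * h)| ≤ 81 * M * h ^ 4 := by
    intro μ hμ
    have habs : |μ * h| ≤ 1 := by
      rw [abs_mul, abs_of_pos hh0]
      nlinarith [abs_nonneg μ]
    have := hbd (μ * h) habs
    refine this.trans ?_
    have hμ2 : μ ^ 2 ≤ 9 := by nlinarith [sq_abs μ, abs_nonneg μ]
    have hμ4 : μ ^ 4 ≤ 81 := by nlinarith [sq_nonneg μ]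
    have e : (μ * h) ^ 4 = μ ^ 4 * h ^ 4 := by ring
    rw [e]
    nlinarith [mul_nonneg (by linarith : (0:ℝ) ≤ 81 - μ ^ 4) (by positivity : (0:ℝ) ≤ M * h ^ 4)]
  have hid : a₀ * f (a + μ₀ * h) + a₁ * f (a + μ₁ * h) + a₂ * f (a + μ₂ * h) -
        ((a₀ + a₁ + a₂) * f a + (a₀ * μ₀ + a₁ * μ₁ + a₂ * μ₂) * deriv f a * h +
          (a₀ * μ₀ ^ 2 + a₁ * μ₁ ^ 2 + a₂ * μ₂ ^ 2) * (iteratedDeriv 2 f a / 2) * h ^ 2 +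
          (a₀ * μ₀ ^ 3 + a₁ * μ₁ ^ 3 + a₂ * μ₂ ^ 3) * (iteratedDeriv 3 f a / 6) * h ^ 3)
      = a₀ * (f (a + μ₀ * h) - P (μ₀ * h)) + a₁ * (f (a + μ₁ * h) - P (μ₁ * h)) +
        a₂ * (f (a + μ₂ * h) - P (μ₂ * h)) := by
    simp only [hP]; ring
  rw [hid]
  have k0 := key μ₀ h0
  have k1 := key μ₁ h1
  have k2 := key μ₂ h2
  calc |a₀ * (f (a + μ₀ * h) - P (μ₀ * h)) + a₁ * (f (a + μ₁ * h) - P (μ₁ * h)) +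
        a₂ * (f (a + μ₂ * h) - P (μ₂ * h))|
      ≤ |a₀| * |f (a + μ₀ * h) - P (μ₀ * h)| + |a₁| * |f (a + μ₁ * h) - P (μ₁ * h)| +
        |a₂| * |f (a + μ₂ * h) - P (μ₂ * h)| := by
        refine le_trans (abs_add_le _ _) ?_
        gcongr
        · refine le_trans (abs_add_le _ _) ?_
          simp [abs_mul]
        · rw [abs_mul]
    _ ≤ (|a₀| + |a₁| + |a₂|) * (81 * M) * h ^ 4 := by
        nlinarith [abs_nonneg a₀, abs_nonneg a₁, abs_nonneg a₂, abs_nonneg (f (a + μ₀ * h) - P (μ₀ * h)), abs_nonneg (f (a + μ₁ * h) - P (μ₁ * h)), abs_nonneg (f (a + μ₂ * h) - P (μ₂ * h))]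

lemma sq_est (q s L c B h : ℝ) (hq : 0 ≤ q) (hB : 0 ≤ B) (h0 : 0 < h) (h1 : h ≤ 1)
    (hs : |s - (L * h ^ 2 + c * h ^ 3)| ≤ B * h ^ 4) :
    |q * s ^ 2 - q * L ^ 2 * h ^ 4| ≤ q * ((|c| + B) * ((|c| + B) + 2 * |L|)) * h ^ 5 := by
  have h3 : (0:ℝ) < h ^ 3 := pow_pos h0 3
  have h2 : (0:ℝ) < h ^ 2 := pow_pos h0 2
  have h43 : h ^ 4 ≤ h ^ 3 := by nlinarith
  have h32 : h ^ 3 ≤ h ^ 2 := by nlinarith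
  have hd : |s - L * h ^ 2| ≤ (|c| + B) * h ^ 3 := by
    have e : s - L * h ^ 2 = (s - (L * h ^ 2 + c * h ^ 3)) + c * h ^ 3 := by ring
    rw [e]
    refine le_trans (abs_add_le _ _) ?_
    rw [abs_mul, abs_of_pos h3]
    nlinarith [abs_nonneg c]
  have hsum : |s + L * h ^ 2| ≤ ((|c| + B) + 2 * |L|) * h ^ 2 := by
    have e : s + L * h ^ 2 = (s - L * h ^ 2) + 2 * (L * h ^ 2) := by ring
    rw [e]
    refine le_trans (abs_add_le _ _) ?_
    rw [abs_mul, abs_mul, abs_of_pos h2]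
    have : |(2:ℝ)| = 2 := by norm_num
    rw [this]
    nlinarith [abs_nonneg L, abs_nonneg c]
  have e : q * s ^ 2 - q * L ^ 2 * h ^ 4 = q * ((s - L * h ^ 2) * (s + L * h ^ 2)) := by ring
  rw [e, abs_mul, abs_mul, abs_of_nonneg hq]
  calc q * (|s - L * h ^ 2| * |s + L * h ^ 2|)
      ≤ q * (((|c| + B) * h ^ 3) * (((|c| + B) + 2 * |L|) * h ^ 2)) := by
        refine mul_le_mul_of_nonneg_left ?_ hq
        exact mul_le_mul hd hsum (abs_nonneg _) (by positivity)
    _ = q * ((|c| + B) * ((|c| + B) + 2 * |L|)) * h ^ 5 := by ring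

lemma stencil_bound (f : ℝ → ℝ) (hf : ContDiff ℝ (⊤ : ℕ∞) f) (xc lam C : ℝ)
    (hlam : |lam| < 1) (hC : 0 < C) (hcrit : deriv f xc = 0) (σ : ℝ)
    (hσ : σ = 1 ∨ σ = -1) :
    ∃ K, 0 < K ∧ ∀ h ∈ Ioo (0:ℝ) (1/3),
      |(1/4) * (3 * f (xc + -lam * h) - 4 * f (xc + (σ - lam) * h) +
            f (xc + (2 * σ - lam) * h)) ^ 2 +
          C * (f (xc + -lam * h) - 2 * f (xc + (σ - lam) * h) +
            f (xc + (2 * σ - lam) * h)) ^ 2 -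
          (lam ^ 2 + C) * (iteratedDeriv 2 f xc) ^ 2 * h ^ 4| ≤ K * h ^ 5 := by
  obtain ⟨M, hM, hcombo⟩ := comboBound f hf xc
  have hσabs : |σ| = 1 := by rcases hσ with rfl | rfl <;> norm_num
  set D2 := iteratedDeriv 2 f xc with hD2
  set D3 := iteratedDeriv 3 f xc with hD3
  set c1 : ℝ := (3 * (-lam) ^ 3 + (-4) * (σ - lam) ^ 3 + 1 * (2 * σ - lam) ^ 3) * (D3 / 6) with hc1
  set c2 : ℝ := (1 * (-lam) ^ 3 + (-2) * (σ - lam) ^ 3 + 1 * (2 * σ - lam) ^ 3) * (D3 / 6) with hc2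
  set B1 : ℝ := 8 * (81 * M) with hB1
  set B2 : ℝ := 4 * (81 * M) with hB2
  have hB1p : 0 < B1 := by rw [hB1]; nlinarith
  have hB2p : 0 < B2 := by rw [hB2]; nlinarith
  set L1 : ℝ := 2 * σ * lam * D2 with hL1
  set K1 : ℝ := (1/4) * ((|c1| + B1) * ((|c1| + B1) + 2 * |L1|)) with hK1
  set K2 : ℝ := C * ((|c2| + B2) * ((|c2| + B2) + 2 * |D2|)) with hK2
  have p1 : 0 < |c1| + B1 := by nlinarith [abs_nonneg c1]
  have p2 : 0 < |c2| + B2 := by nlinarith [abs_nonneg c2]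
  have hK1p : 0 < K1 := by
    rw [hK1]
    have hL := abs_nonneg L1
    exact mul_pos (by norm_num) (mul_pos p1 (by linarith))
  have hK2p : 0 < K2 := by
    rw [hK2]
    have hD := abs_nonneg D2
    exact mul_pos hC (mul_pos p2 (by linarith))
  refine ⟨K1 + K2, by linarith, fun h hh => ?_⟩
  obtain ⟨hh0, hh3⟩ := hh
  have hh1 : h ≤ 1 := by linarith
  -- offset bounds
  have b0 : |(-lam)| ≤ 3 := by rw [abs_neg]; linarith
  have b1 : |σ - lam| ≤ 3 := le_trans (abs_sub _ _) (by rw [hσabs]; linarith)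
  have b2 : |2 * σ - lam| ≤ 3 := by
    refine le_trans (abs_sub _ _) ?_
    rw [abs_mul, hσabs]
    norm_num
    linarith
  have hcb1 := hcombo 3 (-4) 1 (-lam) (σ - lam) (2 * σ - lam) h hh0 hh3.le b0 b1 b2
  have hcb2 := hcombo 1 (-2) 1 (-lam) (σ - lam) (2 * σ - lam) h hh0 hh3.le b0 b1 b2
  have emid1 : (3 + (-4) + 1) * f xc +
      (3 * (-lam) + (-4) * (σ - lam) + 1 * (2 * σ - lam)) * deriv f xc * h +
      (3 * (-lam) ^ 2 + (-4) * (σ - lam) ^ 2 + 1 * (2 * σ - lam) ^ 2) * (D2 / 2) * h ^ 2 +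
      (3 * (-lam) ^ 3 + (-4) * (σ - lam) ^ 3 + 1 * (2 * σ - lam) ^ 3) * (D3 / 6) * h ^ 3
      = L1 * h ^ 2 + c1 * h ^ 3 := by
    rw [hcrit, hL1, hc1]; ring
  have emid2 : (1 + (-2) + 1) * f xc +
      (1 * (-lam) + (-2) * (σ - lam) + 1 * (2 * σ - lam)) * deriv f xc * h +
      (1 * (-lam) ^ 2 + (-2) * (σ - lam) ^ 2 + 1 * (2 * σ - lam) ^ 2) * (D2 / 2) * h ^ 2 +
      (1 * (-lam) ^ 3 + (-2) * (σ - lam) ^ 3 + 1 * (2 * σ - lam) ^ 3) * (D3 / 6) * h ^ 3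
      = D2 * h ^ 2 + c2 * h ^ 3 := by
    rw [hcrit, hc2]; rcases hσ with rfl | rfl <;> ring
  rw [emid1] at hcb1
  rw [emid2] at hcb2
  have habs1 : |(3:ℝ)| + |(-4:ℝ)| + |(1:ℝ)| = 8 := by norm_num
  have habs2 : |(1:ℝ)| + |(-2:ℝ)| + |(1:ℝ)| = 4 := by norm_num
  rw [habs1] at hcb1
  rw [habs2] at hcb2
  set S : ℝ := 3 * f (xc + -lam * h) - 4 * f (xc + (σ - lam) * h) + f (xc + (2 * σ - lam) * h) with hS
  set T : ℝ := f (xc + -lam * h) - 2 * f (xc + (σ - lam) * h) + f (xc + (2 * σ - lam) * h) with hT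
  have hs1 : |S - (L1 * h ^ 2 + c1 * h ^ 3)| ≤ B1 * h ^ 4 := by
    rw [hS, hB1]
    convert hcb1 using 2
    ring
  have hs2 : |T - (D2 * h ^ 2 + c2 * h ^ 3)| ≤ B2 * h ^ 4 := by
    rw [hT, hB2]
    convert hcb2 using 2
    ring
  have est1 := sq_est (1/4) S L1 c1 B1 h (by norm_num) hB1p.le hh0 hh1 hs1
  have est2 := sq_est C T D2 c2 B2 h hC.le hB2p.le hh0 hh1 hs2
  have eL : (1/4) * L1 ^ 2 = lam ^ 2 * D2 ^ 2 := by
    rw [hL1]; rcases hσ with rfl | rfl <;> ring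
  have esplit : (1/4) * S ^ 2 + C * T ^ 2 - (lam ^ 2 + C) * D2 ^ 2 * h ^ 4
      = ((1/4) * S ^ 2 - (1/4) * L1 ^ 2 * h ^ 4) + (C * T ^ 2 - C * D2 ^ 2 * h ^ 4) := by
    rw [eL]; ring
  rw [esplit]
  refine le_trans (abs_add_le _ _) ?_
  rw [hK1, hK2]
  calc |(1/4) * S ^ 2 - (1/4) * L1 ^ 2 * h ^ 4| + |C * T ^ 2 - C * D2 ^ 2 * h ^ 4|
      ≤ (1/4) * ((|c1| + B1) * ((|c1| + B1) + 2 * |L1|)) * h ^ 5 +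
        C * ((|c2| + B2) * ((|c2| + B2) + 2 * |D2|)) * h ^ 5 := add_le_add est1 est2
    _ = ((1/4) * ((|c1| + B1) * ((|c1| + B1) + 2 * |L1|)) +
        C * ((|c2| + B2) * ((|c2| + B2) + 2 * |D2|))) * h ^ 5 := by ring


end WenoAux


/-- The extended local indicator `β₁*` of WENO3-Z_ES4 at grid node `x_j`. -/
noncomputable def wenoBeta1Star (f : ℝ → ℝ) (C xj h : ℝ) : ℝ :=
  (1 / 4) * (3 * f xj - 4 * f (xj + h) + f (xj + 2 * h)) ^ 2 +
    C * (f xj - 2 * f (xj + h) + f (xj + 2 * h)) ^ 2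

/-- The extended local indicator `β₀*` of WENO3-Z_ES4 at grid node `x_j`. -/
noncomputable def wenoBeta0Star (f : ℝ → ℝ) (C xj h : ℝ) : ℝ :=
  (1 / 4) * (3 * f xj - 4 * f (xj - h) + f (xj - 2 * h)) ^ 2 +
    C * (f (xj - 2 * h) - 2 * f (xj - h) + f xj) ^ 2

/-- Expansion of the extended local indicators at a critical point
`x_c = x_j + λ·h`: both have the same leading term `(λ² + C)·f″(x_c)²·h⁴`. -/
theorem weno3_extended_indicator_expansion
    (f : ℝ → ℝ) (hf : ContDiff ℝ (⊤ : ℕ∞) f) (xc lam C : ℝ)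
    (hlam : lam ∈ Set.Ioo (-1 : ℝ) 1) (hC : 0 < C)
    (hcrit : deriv f xc = 0) :
    (∃ K > 0, ∃ ε > 0, ∀ h ∈ Set.Ioo (0:ℝ) ε,
      |wenoBeta1Star f C (xc - lam * h) h -
          (lam ^ 2 + C) * (iteratedDeriv 2 f xc) ^ 2 * h ^ 4| ≤ K * h ^ 5) ∧
    (∃ K > 0, ∃ ε > 0, ∀ h ∈ Set.Ioo (0:ℝ) ε,
      |wenoBeta0Star f C (xc - lam * h) h -
          (lam ^ 2 + C) * (iteratedDeriv 2 f xc) ^ 2 * h ^ 4| ≤ K * h ^ 5) := by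
  have hlam' : |lam| < 1 := abs_lt.mpr ⟨hlam.1, hlam.2⟩
  constructor
  · obtain ⟨K, hKp, hb⟩ := stencil_bound f hf xc lam C hlam' hC hcrit 1 (Or.inl rfl)
    refine ⟨K, hKp, 1/3, by norm_num, fun h hh => ?_⟩
    have hbh := hb h hh
    have e0 : xc + -lam * h = xc - lam * h := by ring
    have e1 : xc + (1 - lam) * h = xc - lam * h + h := by ring
    have e2 : xc + (2 * 1 - lam) * h = xc - lam * h + 2 * h := by ring
    rw [e1, e2, e0] at hbh
    have heq : wenoBeta1Star f C (xc - lam * h) h =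
        (1/4) * (3 * f (xc - lam * h) - 4 * f (xc - lam * h + h) +
          f (xc - lam * h + 2 * h)) ^ 2 +
        C * (f (xc - lam * h) - 2 * f (xc - lam * h + h) +
          f (xc - lam * h + 2 * h)) ^ 2 := by
      simp only [wenoBeta1Star]
    rw [heq]
    exact hbh
  · obtain ⟨K, hKp, hb⟩ := stencil_bound f hf xc lam C hlam' hC hcrit (-1) (Or.inr rfl)
    refine ⟨K, hKp, 1/3, by norm_num, fun h hh => ?_⟩
    have hbh := hb h hh
    have e0 : xc + -lam * h = xc - lam * h := by ring
    have e1 : xc + (-1 - lam) * h = xc - lam * h - h := by ring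
    have e2 : xc + (2 * -1 - lam) * h = xc - lam * h - 2 * h := by ring
    rw [e1, e2, e0] at hbh
    have heq : wenoBeta0Star f C (xc - lam * h) h =
        (1/4) * (3 * f (xc - lam * h) - 4 * f (xc - lam * h - h) +
          f (xc - lam * h - 2 * h)) ^ 2 +
        C * (f (xc - lam * h) - 2 * f (xc - lam * h - h) +
          f (xc - lam * h - 2 * h)) ^ 2 := by
      simp only [wenoBeta0Star]
      ring
    rw [heq]
    exact hbh
end
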